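/- arXiv:2207.02101 — 2 statements merged into one kernel-verified Lean document; each statement's English description precedes it below -/
import Mathlib

section
/- (Theorem 1 for a linear Hurwitz–Metzler comparison system.) Let Γ ∈ ℝ^{n̄×n̄} be Metzler and Hurwitz. Then there exist M ≥ 1 and λ > 0, depending only on Γ, with the following property: for any d ∈ ℕ, any class-K∞ functions α, ᾱ, any μ ∈ ℝ^{n̄} with all components positive and μ_min := minₖ μₖ, any constant c ∈ ℝ^{n̄} with c ⪰ 0, any continuous e : [0,∞) → ℝ^d, and any differentiable V : [0,∞) → ℝ^{n̄} satisfying V(t) ⪰ 0, the componentwise differential inequality V'(t) ⪯ Γ V(t) + c, and the sandwich α(|e(t)|) ≤ μᵀV(t) ≤ ᾱ(|e(t)|) for all t ≥ 0, it holds for every t ≥ 0 that α(|e(t)|) ≤ |μ| M e^{−λt} ᾱ(|e(0)|)/μ_min + |μ|(M/λ)|c|; consequently |e(t)| ≤ α⁻¹( 2|μ| M ᾱ(|e(0)|)/μ_min ) + α⁻¹( 2|μ|(M/λ)|c| ) for all t ≥ 0. -/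
/-- The Euclidean norm on `ℝⁿ`. -/
noncomputable def eucNormFin {n : ℕ} (x : Fin n → ℝ) : ℝ := Real.sqrt (∑ i, x i ^ 2)

/-- A real square matrix is Hurwitz if every eigenvalue of it, regarded as a complex
matrix, has strictly negative real part. -/
def IsHurwitz {n : ℕ} (Γ : Matrix (Fin n) (Fin n) ℝ) : Prop :=
  ∀ μ ∈ spectrum ℂ (Γ.map (Complex.ofReal)), μ.re < 0

/-- A real square matrix is Metzler if all its off-diagonal entries are nonnegative. -/
def IsMetzler {n : ℕ} (Γ : Matrix (Fin n) (Fin n) ℝ) : Prop :=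
  ∀ i j : Fin n, i ≠ j → 0 ≤ Γ i j

/-- `α : [0,∞) → [0,∞)` is of class `K∞`: continuous, strictly increasing, `α 0 = 0`,
and onto `[0,∞)` (only the behaviour on `[0,∞)` is relevant). -/
structure IsClassKInf (α : ℝ → ℝ) : Prop where
  nonneg : ∀ x ≥ (0 : ℝ), 0 ≤ α x
  cont : ContinuousOn α (Set.Ici (0 : ℝ))
  mono : StrictMonoOn α (Set.Ici (0 : ℝ))
  zero : α 0 = 0
  surj : ∀ y ≥ (0 : ℝ), ∃ x ≥ (0 : ℝ), α x = y

/-- `αinv` is the inverse on `[0,∞)` of `α`. -/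
def IsInvOnNonneg (αinv α : ℝ → ℝ) : Prop :=
  (∀ x ≥ (0 : ℝ), αinv (α x) = x) ∧ (∀ y ≥ (0 : ℝ), 0 ≤ αinv y ∧ α (αinv y) = y)


section Theorem1Aux

open Matrix Finset Set Topology Filter

set_option maxHeartbeats 1000000

variable {n : ℕ}



lemma pow_entry_nonneg {C : Matrix (Fin n) (Fin n) ℝ} (hC : ∀ i j, 0 ≤ C i j) :
    ∀ k i j, 0 ≤ (C ^ k) i j := by
  intro k
  induction k with
  | zero => intro i j; by_cases h : i = j <;> simp [pow_zero, Matrix.one_apply, h]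
  | succ k ih =>
    intro i j
    rw [pow_succ, Matrix.mul_apply]
    exact Finset.sum_nonneg fun l _ => mul_nonneg (ih i l) (hC l j)

lemma pow_entry_le_geom {C : Matrix (Fin n) (Fin n) ℝ} {r : ℝ} (hr0 : 0 ≤ r)
    (hC : ∀ i j, 0 ≤ C i j) (hrow : ∀ i, ∑ j, C i j ≤ r) :
    ∀ k i j, (C ^ k) i j ≤ r ^ k := by
  intro k
  induction k with
  | zero =>
    intro i j
    by_cases h : i = j <;> simp [pow_zero, Matrix.one_apply, h]
  | succ k ih =>
    intro i j
    rw [pow_succ', Matrix.mul_apply]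
    calc ∑ l, C i l * (C ^ k) l j ≤ ∑ l, C i l * r ^ k := by
          exact Finset.sum_le_sum fun l _ => mul_le_mul_of_nonneg_left (ih l j) (hC i l)
      _ = (∑ l, C i l) * r ^ k := by rw [← Finset.sum_mul]
      _ ≤ r * r ^ k := mul_le_mul_of_nonneg_right (hrow i) (pow_nonneg hr0 k)
      _ = r ^ (k + 1) := (pow_succ' r k).symm

lemma summable_pow_entry {C : Matrix (Fin n) (Fin n) ℝ} {r : ℝ} (hr0 : 0 ≤ r) (hr1 : r < 1)
    (hC : ∀ i j, 0 ≤ C i j) (hrow : ∀ i, ∑ j, C i j ≤ r) (i j : Fin n) :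
    Summable fun k => (C ^ k) i j :=
  Summable.of_nonneg_of_le (fun k => pow_entry_nonneg hC k i j)
    (fun k => pow_entry_le_geom hr0 hC hrow k i j) (summable_geometric_of_lt_one hr0 hr1)

/-- Neumann series: `(1 - C)` has an entrywise-nonnegative right inverse. -/
lemma neumann_right_inv {C : Matrix (Fin n) (Fin n) ℝ} {r : ℝ} (hr0 : 0 ≤ r) (hr1 : r < 1)
    (hC : ∀ i j, 0 ≤ C i j) (hrow : ∀ i, ∑ j, C i j ≤ r) :
    ∃ G : Matrix (Fin n) (Fin n) ℝ, (1 - C) * G = 1 ∧ ∀ i j, 0 ≤ G i j := by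
  set G : Matrix (Fin n) (Fin n) ℝ := Matrix.of fun i j => ∑' k, (C ^ k) i j with hG
  have hsum := summable_pow_entry hr0 hr1 hC hrow
  refine ⟨G, ?_, fun i j => tsum_nonneg fun k => pow_entry_nonneg hC k i j⟩
  ext i j
  have hCG : (C * G) i j = ∑' k, (C ^ (k + 1)) i j := by
    rw [Matrix.mul_apply]
    have : ∀ l ∈ Finset.univ, Summable fun k => C i l * (C ^ k) l j :=
      fun l _ => (hsum l j).mul_left _
    calc ∑ l, C i l * G l j = ∑ l, ∑' k, C i l * (C ^ k) l j := by
          refine Finset.sum_congr rfl fun l _ => ?_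
          rw [hG, Matrix.of_apply, ← tsum_mul_left]
      _ = ∑' k, ∑ l, C i l * (C ^ k) l j := (Summable.tsum_finsetSum this).symm
      _ = ∑' k, (C ^ (k + 1)) i j := by
          refine tsum_congr fun k => ?_
          rw [pow_succ', Matrix.mul_apply]
  have : ((1 - C) * G) i j = G i j - (C * G) i j := by
    rw [Matrix.sub_mul, Matrix.one_mul, Matrix.sub_apply]
  rw [this, hCG, hG, Matrix.of_apply, Summable.tsum_eq_zero_add (hsum i j), pow_zero]
  simp [Matrix.one_apply]

/-- For Hurwitz `Γ` and real `s ≥ 0`, `s • 1 - Γ` is invertible. -/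
lemma isUnit_det_smul_one_sub {Γ : Matrix (Fin n) (Fin n) ℝ} (hHur : IsHurwitz Γ)
    {s : ℝ} (hs : 0 ≤ s) : IsUnit ((s • (1 : Matrix (Fin n) (Fin n) ℝ) - Γ)).det := by
  rw [isUnit_iff_ne_zero]
  intro h0
  have hmap : ((s • (1 : Matrix (Fin n) (Fin n) ℝ) - Γ).map Complex.ofReal)
      = algebraMap ℂ (Matrix (Fin n) (Fin n) ℂ) (s : ℂ) - Γ.map Complex.ofReal := by
    ext i j
    by_cases h : i = j <;>
      simp [Matrix.map_apply, Matrix.sub_apply, Matrix.smul_apply, Matrix.one_apply, h,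
        Algebra.algebraMap_eq_smul_one, smul_eq_mul]
  have hdet : (algebraMap ℂ (Matrix (Fin n) (Fin n) ℂ) (s : ℂ) - Γ.map Complex.ofReal).det = 0 := by
    rw [← hmap]
    have : ((s • (1 : Matrix (Fin n) (Fin n) ℝ) - Γ).map Complex.ofReal).det
        = Complex.ofRealHom ((s • (1 : Matrix (Fin n) (Fin n) ℝ) - Γ)).det := by
      rw [RingHom.map_det]; rfl
    rw [this, h0, map_zero]
  have hmem : (s : ℂ) ∈ spectrum ℂ (Γ.map Complex.ofReal) := by
    rw [spectrum.mem_iff]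
    intro hu
    rw [Matrix.isUnit_iff_isUnit_det, hdet] at hu
    exact hu.ne_zero rfl
  have := hHur _ hmem
  simp only [Complex.ofReal_re] at this
  linarith

lemma isHurwitz_transpose {Γ : Matrix (Fin n) (Fin n) ℝ} (hHur : IsHurwitz Γ) :
    IsHurwitz Γᵀ := by
  intro z hz
  apply hHur
  rw [spectrum.mem_iff] at hz ⊢
  intro hu
  apply hz
  rw [Matrix.isUnit_iff_isUnit_det] at hu ⊢
  have : (algebraMap ℂ (Matrix (Fin n) (Fin n) ℂ) z - Γᵀ.map Complex.ofReal)
      = (algebraMap ℂ (Matrix (Fin n) (Fin n) ℂ) z - Γ.map Complex.ofReal)ᵀ := by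
    rw [Matrix.transpose_sub, Matrix.transpose_map, Algebra.algebraMap_eq_smul_one,
      Matrix.transpose_smul, Matrix.transpose_one]
  rw [this, Matrix.det_transpose]
  exact hu

/-- Key lemma: if `Γ` is Metzler and Hurwitz then `-Γ` has an entrywise nonnegative
(right) inverse. -/
lemma neg_inv_nonneg_of_metzler_hurwitz {Γ : Matrix (Fin n) (Fin n) ℝ}
    (hMet : IsMetzler Γ) (hHur : IsHurwitz Γ) :
    ∃ Q : Matrix (Fin n) (Fin n) ℝ, (-Γ) * Q = 1 ∧ ∀ i j, 0 ≤ Q i j := by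
  classical
  set σ : ℝ := 1 + ∑ k, |Γ k k| with hσdef
  have hσ1 : 1 ≤ σ := by
    have : (0:ℝ) ≤ ∑ k, |Γ k k| := Finset.sum_nonneg fun k _ => abs_nonneg _
    linarith
  have hσ0 : 0 < σ := by linarith
  set B : Matrix (Fin n) (Fin n) ℝ := Γ + σ • 1 with hBdef
  have hB : ∀ i j, 0 ≤ B i j := by
    intro i j
    by_cases h : i = j
    · subst h
      have h1 : -Γ i i ≤ |Γ i i| := neg_le_abs _
      have h2 : |Γ i i| ≤ ∑ k, |Γ k k| :=
        Finset.single_le_sum (fun k _ => abs_nonneg (Γ k k)) (Finset.mem_univ i)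
      simp only [hBdef, Matrix.add_apply, Matrix.smul_apply, Matrix.one_apply_eq, smul_eq_mul,
        mul_one]
      linarith
    · simpa [hBdef, Matrix.add_apply, Matrix.smul_apply, Matrix.one_apply_ne h] using hMet i j h
  set Ms : ℝ → Matrix (Fin n) (Fin n) ℝ := fun s => s • 1 - B with hMsdef
  have hMseq : ∀ s : ℝ, Ms s = (s - σ) • (1 : Matrix (Fin n) (Fin n) ℝ) - Γ := by
    intro s
    simp only [hMsdef, hBdef, sub_smul]
    abel
  have hMs : ∀ s : ℝ, σ ≤ s → IsUnit (Ms s).det := by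
    intro s hs
    rw [hMseq]
    exact isUnit_det_smul_one_sub hHur (by linarith)
  have hMF : ∀ s : ℝ, σ ≤ s → Ms s * (Ms s)⁻¹ = 1 := fun s hs => (Ms s).mul_nonsing_inv (hMs s hs)
  set F : ℝ → Matrix (Fin n) (Fin n) ℝ := fun s => (Ms s)⁻¹ with hFdef
  -- total sum of entries of B
  set rB : ℝ := ∑ i, ∑ j, B i j with hrBdef
  have hrB0 : 0 ≤ rB := Finset.sum_nonneg fun i _ => Finset.sum_nonneg fun j _ => hB i j
  set K : ℝ := σ + rB with hKdef
  have hσK : σ ≤ K := by linarith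
  have hK0 : 0 < K := by linarith
  have hrBK : rB < K := by linarith
  -- base case
  have hFK : ∀ i j, 0 ≤ F K i j := by
    set C : Matrix (Fin n) (Fin n) ℝ := K⁻¹ • B with hCdef
    have hC : ∀ i j, 0 ≤ C i j := fun i j => by
      simpa [hCdef, Matrix.smul_apply, smul_eq_mul] using
        mul_nonneg (inv_nonneg.mpr hK0.le) (hB i j)
    have hrow : ∀ i, ∑ j, C i j ≤ K⁻¹ * rB := by
      intro i
      have h1 : ∑ j, C i j = K⁻¹ * ∑ j, B i j := by
        simp [hCdef, Matrix.smul_apply, smul_eq_mul, Finset.mul_sum]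
      have h2 : ∑ j, B i j ≤ rB :=
        Finset.single_le_sum (f := fun i => ∑ j, B i j)
          (fun i _ => Finset.sum_nonneg fun j _ => hB i j) (Finset.mem_univ i)
      rw [h1]
      exact mul_le_mul_of_nonneg_left h2 (inv_nonneg.mpr hK0.le)
    have hr0 : 0 ≤ K⁻¹ * rB := mul_nonneg (inv_nonneg.mpr hK0.le) hrB0
    have hr1 : K⁻¹ * rB < 1 := by
      rw [inv_mul_lt_iff₀ hK0, mul_one]
      exact hrBK
    obtain ⟨G, hG1, hGpos⟩ := neumann_right_inv hr0 hr1 hC hrow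
    have hright : Ms K * (K⁻¹ • G) = 1 := by
      have h1 : Ms K = K • ((1 : Matrix (Fin n) (Fin n) ℝ) - C) := by
        simp only [hMsdef, hCdef, smul_sub, smul_smul, mul_inv_cancel₀ hK0.ne', one_smul]
      rw [h1, Matrix.smul_mul, Matrix.mul_smul, smul_smul, mul_inv_cancel₀ hK0.ne', one_smul, hG1]
    have : F K = K⁻¹ • G := Matrix.inv_eq_right_inv hright
    intro i j
    rw [this]
    simpa [Matrix.smul_apply, smul_eq_mul] using
      mul_nonneg (inv_nonneg.mpr hK0.le) (hGpos i j)
  -- downward step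
  have step : ∀ a : ℝ, σ ≤ a → (∀ i j, 0 ≤ F a i j) → ∀ δ : ℝ, 0 < δ →
      δ * (∑ i, ∑ j, F a i j) < 1 → σ ≤ a - δ → ∀ i j, 0 ≤ F (a - δ) i j := by
    intro a ha hFa δ hδ hδT haδ
    set T : ℝ := ∑ i, ∑ j, F a i j with hTdef
    have hT0 : 0 ≤ T := Finset.sum_nonneg fun i _ => Finset.sum_nonneg fun j _ => hFa i j
    set C : Matrix (Fin n) (Fin n) ℝ := δ • F a with hCdef
    have hC : ∀ i j, 0 ≤ C i j := fun i j => by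
      simpa [hCdef, Matrix.smul_apply, smul_eq_mul] using mul_nonneg hδ.le (hFa i j)
    have hrow : ∀ i, ∑ j, C i j ≤ δ * T := by
      intro i
      have h1 : ∑ j, C i j = δ * ∑ j, F a i j := by
        simp [hCdef, Matrix.smul_apply, smul_eq_mul, Finset.mul_sum]
      have h2 : ∑ j, F a i j ≤ T :=
        Finset.single_le_sum (f := fun i => ∑ j, F a i j)
          (fun i _ => Finset.sum_nonneg fun j _ => hFa i j) (Finset.mem_univ i)
      rw [h1]
      exact mul_le_mul_of_nonneg_left h2 hδ.le
    obtain ⟨H, hH1, hHpos⟩ := neumann_right_inv (mul_nonneg hδ.le hT0) hδT hC hrow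
    have hfact : Ms (a - δ) = Ms a * ((1 : Matrix (Fin n) (Fin n) ℝ) - C) := by
      rw [Matrix.mul_sub, Matrix.mul_one, hCdef, Matrix.mul_smul, hMF a ha]
      simp only [hMsdef, sub_smul]
      abel
    have hright : Ms (a - δ) * (H * F a) = 1 := by
      rw [hfact, Matrix.mul_assoc, ← Matrix.mul_assoc (1 - C), hH1, Matrix.one_mul, hMF a ha]
    have : F (a - δ) = H * F a := Matrix.inv_eq_right_inv hright
    intro i j
    rw [this, Matrix.mul_apply]
    exact Finset.sum_nonneg fun l _ => mul_nonneg (hHpos i l) (hFa l j)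
  -- continuity of entries of F on [σ, ∞)
  have hMcont : Continuous Ms := by
    apply continuous_matrix
    intro i j
    simp only [hMsdef, Matrix.sub_apply, Matrix.smul_apply, smul_eq_mul]
    exact (continuous_id.mul continuous_const).sub continuous_const
  have hFcont : ∀ i j, ContinuousOn (fun s => F s i j) (Ici σ) := by
    intro i j
    have heq : ∀ s ∈ Ici σ, F s i j = ((Ms s).det)⁻¹ * (Ms s).adjugate i j := by
      intro s hs
      rw [hFdef]
      simp only
      rw [Matrix.inv_def, Ring.inverse_eq_inv, Matrix.smul_apply, smul_eq_mul]
    refine ContinuousOn.congr ?_ heq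
    exact ((hMcont.matrix_det.continuousOn.inv₀ fun s hs =>
        isUnit_iff_ne_zero.mp (hMs s hs)).mul
      ((hMcont.matrix_adjugate.matrix_elem i j).continuousOn))
  -- the inf of the good set
  set S : Set ℝ := {s | s ∈ Icc σ K ∧ ∀ u ∈ Icc s K, ∀ i j, 0 ≤ F u i j} with hSdef
  have hKS : K ∈ S := by
    refine ⟨⟨hσK, le_refl K⟩, fun u hu i j => ?_⟩
    have : u = K := le_antisymm hu.2 hu.1
    rw [this]; exact hFK i j
  have hSne : S.Nonempty := ⟨K, hKS⟩
  have hSbd : BddBelow S := ⟨σ, fun s hs => hs.1.1⟩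
  set a : ℝ := sInf S with hadef
  have haσ : σ ≤ a := le_csInf hSne fun s hs => hs.1.1
  have haK : a ≤ K := csInf_le hSbd hKS
  have h1 : ∀ u ∈ Ioc a K, ∀ i j, 0 ≤ F u i j := by
    intro u hu i j
    obtain ⟨s, hsS, hsu⟩ := exists_lt_of_csInf_lt hSne hu.1
    exact hsS.2 u ⟨hsu.le, hu.2⟩ i j
  have h2 : ∀ i j, 0 ≤ F a i j := by
    rcases eq_or_lt_of_le haK with heq | hlt
    · intro i j; rw [heq]; exact hFK i j
    · intro i j
      haveI hne : (nhdsWithin a (Ioc a K)).NeBot := left_nhdsWithin_Ioc_neBot hlt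
      have htend : Filter.Tendsto (fun s => F s i j) (nhdsWithin a (Ioc a K)) (nhds (F a i j)) :=
        ((hFcont i j) a haσ).mono (fun u hu => le_trans haσ hu.1.le)
      exact ge_of_tendsto htend (Filter.eventually_of_mem self_mem_nhdsWithin
        fun u hu => h1 u hu i j)
  have haσ' : a = σ := by
    by_contra hne
    have hlt : σ < a := lt_of_le_of_ne haσ (Ne.symm hne)
    set T : ℝ := ∑ i, ∑ j, F a i j with hTdef
    have hT0 : 0 ≤ T := Finset.sum_nonneg fun i _ => Finset.sum_nonneg fun j _ => h2 i j
    set δ : ℝ := min (a - σ) (1 / (2 * (T + 1))) with hδdef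
    have hδ0 : 0 < δ := lt_min (by linarith) (by positivity)
    have hδT : δ * T < 1 := by
      have h1' : δ ≤ 1 / (2 * (T + 1)) := min_le_right _ _
      have : δ * T ≤ (1 / (2 * (T + 1))) * T := mul_le_mul_of_nonneg_right h1' hT0
      have h2' : (1 / (2 * (T + 1))) * T < 1 := by
        rw [div_mul_eq_mul_div, one_mul, div_lt_one (by positivity)]
        nlinarith
      linarith
    have hδσ : σ ≤ a - δ := by
      have := min_le_left (a - σ) (1 / (2 * (T + 1)))
      have hδle : δ ≤ a - σ := this
      linarith
    have hmem : a - δ ∈ S := by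
      refine ⟨⟨hδσ, by linarith⟩, fun u hu i j => ?_⟩
      rcases lt_or_ge u a with hua | hau
      · have : u = a - (a - u) := by ring
        rw [this]
        refine step a haσ h2 (a - u) (by linarith) ?_ (by linarith [hu.1]) i j
        calc (a - u) * T ≤ δ * T := mul_le_mul_of_nonneg_right (by linarith [hu.1]) hT0
          _ < 1 := hδT
      · rcases eq_or_lt_of_le hau with heq | hlt'
        · rw [← heq]; exact h2 i j
        · exact h1 u ⟨hlt', hu.2⟩ i j
    have : a ≤ a - δ := csInf_le hSbd hmem
    linarith
  have hFσ : ∀ i j, 0 ≤ F σ i j := haσ' ▸ h2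
  have hMσ : Ms σ = -Γ := by
    rw [hMseq]
    simp
  refine ⟨F σ, ?_, hFσ⟩
  rw [← hMσ]
  exact hMF σ le_rfl

/-- positive vector with `Γᵀ p = -1` -/
lemma exists_pos_vec {Γ : Matrix (Fin n) (Fin n) ℝ}
    (hMet : IsMetzler Γ) (hHur : IsHurwitz Γ) :
    ∃ p : Fin n → ℝ, (∀ k, 0 < p k) ∧ ∀ j, ∑ k, Γ k j * p k = -1 := by
  have hMetT : IsMetzler Γᵀ := fun i j hij => hMet j i (Ne.symm hij)
  obtain ⟨Q, hQ1, hQpos⟩ := neg_inv_nonneg_of_metzler_hurwitz hMetT (isHurwitz_transpose hHur)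
  set p : Fin n → ℝ := fun k => ∑ j, Q k j with hpdef
  have hp0 : ∀ k, 0 ≤ p k := fun k => Finset.sum_nonneg fun j _ => hQpos k j
  have hQmul : Γᵀ * Q = -1 := by
    have h : -(Γᵀ * Q) = 1 := by rw [← Matrix.neg_mul]; exact hQ1
    rw [← neg_neg (Γᵀ * Q), h]
  have hkey : ∀ j, ∑ k, Γ k j * p k = -1 := by
    intro j
    have h1 : ∑ k, Γ k j * p k = (Γᵀ *ᵥ p) j := by
      rw [Matrix.mulVec, dotProduct]
      exact Finset.sum_congr rfl fun k _ => by rw [Matrix.transpose_apply]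
    have h2 : (Γᵀ *ᵥ p) j = ((Γᵀ * Q) *ᵥ (fun _ => (1:ℝ))) j := by
      have : p = Q *ᵥ (fun _ => (1:ℝ)) := by
        funext k
        simp [hpdef, Matrix.mulVec, dotProduct]
      rw [this, Matrix.mulVec_mulVec]
    rw [h1, h2, hQmul]
    simp [Matrix.mulVec, dotProduct, Matrix.one_apply]
  refine ⟨p, fun k => ?_, hkey⟩
  rcases lt_or_eq_of_le (hp0 k) with h | h
  · exact h
  · exfalso
    have hsum : 0 ≤ ∑ l, Γ l k * p l := by
      refine Finset.sum_nonneg fun l _ => ?_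
      by_cases hlk : l = k
      · subst hlk; rw [← h, mul_zero]
      · exact mul_nonneg (hMet l k hlk) (hp0 l)
    rw [hkey k] at hsum
    linarith

lemma gronwall_scalar {w w' : ℝ → ℝ} {lam C : ℝ} (hlam : 0 < lam) (hC : 0 ≤ C)
    (hw : ∀ t ≥ (0:ℝ), HasDerivWithinAt w (w' t) (Ici (0:ℝ)) t)
    (hb : ∀ t ≥ (0:ℝ), w' t ≤ -lam * w t + C) :
    ∀ t ≥ (0:ℝ), w t ≤ w 0 * Real.exp (-lam * t) + C / lam := by
  intro t ht
  have key := le_gronwallBound_of_liminf_deriv_right_le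
    (f := w) (f' := w') (δ := w 0) (K := -lam) (ε := C) (a := 0) (b := t)
    (fun x hx => ((hw x hx.1).continuousWithinAt).mono (fun y hy => hy.1))
    (fun x hx r hr => ((hw x hx.1).mono (fun y (hy : y ∈ Ici x) =>
      le_trans hx.1 hy)).liminf_right_slope_le hr)
    le_rfl
    (fun x hx => hb x hx.1)
    t ⟨ht, le_rfl⟩
  rw [sub_zero, gronwallBound_of_K_ne_0 (by linarith : -lam ≠ 0)] at key
  have hE1 : Real.exp (-lam * t) ≤ 1 := by
    rw [← Real.exp_zero]
    exact Real.exp_le_exp.mpr (by nlinarith)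
  have hE0 : 0 < Real.exp (-lam * t) := Real.exp_pos _
  simp only at key
  have heq : C / -lam * (Real.exp (-lam * t) - 1) = C / lam * (1 - Real.exp (-lam * t)) := by
    rw [div_neg]
    ring
  rw [heq] at key
  have hD : 0 ≤ C / lam := div_nonneg hC hlam.le
  nlinarith [key, hD, hE1, hE0]

lemma enorm_nonneg' {n : ℕ} (x : Fin n → ℝ) : 0 ≤ eucNormFin x := Real.sqrt_nonneg _

lemma le_enorm' {n : ℕ} (x : Fin n → ℝ) (k : Fin n) (hx : 0 ≤ x k) : x k ≤ eucNormFin x := by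
  have h1 : x k ^ 2 ≤ ∑ i, x i ^ 2 :=
    Finset.single_le_sum (f := fun i => x i ^ 2) (fun i _ => sq_nonneg _) (Finset.mem_univ k)
  calc x k = Real.sqrt (x k ^ 2) := by rw [Real.sqrt_sq hx]
    _ ≤ eucNormFin x := Real.sqrt_le_sqrt h1


end Theorem1Aux

set_option maxHeartbeats 1000000

/-- Theorem 1 for a linear Hurwitz–Metzler comparison system: if `Γ` is Metzler and
Hurwitz, then there are `M ≥ 1`, `λ > 0` depending only on `Γ` such that, for any
nonnegative differentiable `V` satisfying the componentwise differential inequality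
`V' ⪯ Γ V + c` (with `c ⪰ 0` constant) and the class-`K∞` sandwich
`α(|e(t)|) ≤ μᵀV(t) ≤ ᾱ(|e(t)|)`, one has for every `t ≥ 0`
`α(|e(t)|) ≤ |μ| M e^{-λ t} ᾱ(|e(0)|)/μ_min + |μ|(M/λ)|c|`, and consequently
`|e(t)| ≤ α⁻¹(2|μ| M ᾱ(|e(0)|)/μ_min) + α⁻¹(2|μ|(M/λ)|c|)`. -/
theorem theorem1_linear_hurwitz_metzler {nbar : ℕ} (hn : 0 < nbar)
    (Γ : Matrix (Fin nbar) (Fin nbar) ℝ) (hMet : IsMetzler Γ) (hHur : IsHurwitz Γ) :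
    ∃ M ≥ (1 : ℝ), ∃ lam > (0 : ℝ),
      ∀ (d : ℕ) (α αbar αinv : ℝ → ℝ),
      IsClassKInf α → IsClassKInf αbar → IsInvOnNonneg αinv α →
      ∀ (μ : Fin nbar → ℝ), (∀ k, 0 < μ k) →
      ∀ (c : Fin nbar → ℝ), (∀ k, 0 ≤ c k) →
      ∀ (e : ℝ → (Fin d → ℝ)), ContinuousOn e (Set.Ici (0 : ℝ)) →
      ∀ (V V' : ℝ → (Fin nbar → ℝ)),
      (∀ t ≥ (0 : ℝ), HasDerivWithinAt V (V' t) (Set.Ici (0 : ℝ)) t) →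
      (∀ t ≥ (0 : ℝ), ∀ k, 0 ≤ V t k) →
      (∀ t ≥ (0 : ℝ), ∀ k, V' t k ≤ Γ.mulVec (V t) k + c k) →
      (∀ t ≥ (0 : ℝ),
        α (eucNormFin (e t)) ≤ (∑ k, μ k * V t k) ∧
        (∑ k, μ k * V t k) ≤ αbar (eucNormFin (e t))) →
      ∀ t ≥ (0 : ℝ),
        α (eucNormFin (e t)) ≤
          eucNormFin μ * M * Real.exp (-lam * t) *
            αbar (eucNormFin (e 0)) / (Finset.univ.inf' (Finset.univ_nonempty_iff.mpr
              (Fin.pos_iff_nonempty.mp hn)) μ) +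
          eucNormFin μ * (M / lam) * eucNormFin c ∧
        eucNormFin (e t) ≤
          αinv (2 * (eucNormFin μ * M * αbar (eucNormFin (e 0)) /
            (Finset.univ.inf' (Finset.univ_nonempty_iff.mpr
              (Fin.pos_iff_nonempty.mp hn)) μ))) +
          αinv (2 * (eucNormFin μ * (M / lam) * eucNormFin c)) := by
  classical
  obtain ⟨p, hppos, hpeq⟩ := exists_pos_vec hMet hHur
  set P : ℝ := ∑ k, p k with hPdef
  have hpleP : ∀ k, p k ≤ P :=
    fun k => Finset.single_le_sum (fun i _ => (hppos i).le) (Finset.mem_univ k)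
  have hne : (Finset.univ : Finset (Fin nbar)).Nonempty :=
    Finset.univ_nonempty_iff.mpr (Fin.pos_iff_nonempty.mp hn)
  have hP0 : 0 < P := by
    obtain ⟨k0⟩ := Fin.pos_iff_nonempty.mp hn
    exact lt_of_lt_of_le (hppos k0) (hpleP k0)
  set pm : ℝ := Finset.univ.inf' hne p with hpmdef
  have hpm_le : ∀ k, pm ≤ p k := fun k => Finset.inf'_le p (Finset.mem_univ k)
  have hpm_pos : 0 < pm := by
    obtain ⟨b, _, hb⟩ := Finset.exists_mem_eq_inf' hne p
    rw [hpmdef, hb]; exact hppos b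
  set lam : ℝ := P⁻¹ with hlamdef
  have hlam0 : 0 < lam := inv_pos.mpr hP0
  set M : ℝ := max 1 (nbar * P / pm) with hMdef
  have hM1 : (1:ℝ) ≤ M := le_max_left _ _
  have hMnP : (nbar : ℝ) * P / pm ≤ M := le_max_right _ _
  have hMP : P / pm ≤ M := by
    refine le_trans ?_ hMnP
    have h1 : (1:ℝ) ≤ (nbar:ℝ) := by exact_mod_cast hn
    rw [div_le_div_iff₀ hpm_pos hpm_pos]
    nlinarith [hP0, hpm_pos, mul_pos hP0 hpm_pos]
  refine ⟨M, hM1, lam, hlam0, ?_⟩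
  intro d α αbar αinv hα hαbar hαinv μ hμpos c hc e he V V' hV hV0 hV' hsand
  set μm : ℝ := Finset.univ.inf' hne μ with hμmdef
  have hμm_le : ∀ k, μm ≤ μ k := fun k => Finset.inf'_le μ (Finset.mem_univ k)
  have hμm_pos : 0 < μm := by
    obtain ⟨b, _, hb⟩ := Finset.exists_mem_eq_inf' hne μ
    rw [hμmdef, hb]; exact hμpos b
  have henμ : ∀ k, μ k ≤ eucNormFin μ := fun k => le_enorm' μ k (hμpos k).le
  have henμ0 : 0 ≤ eucNormFin μ := enorm_nonneg' μ
  have henc : ∀ k, c k ≤ eucNormFin c := fun k => le_enorm' c k (hc k)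
  have henc0 : 0 ≤ eucNormFin c := enorm_nonneg' c
  set w : ℝ → ℝ := fun t => ∑ k, p k * V t k with hwdef
  set w' : ℝ → ℝ := fun t => ∑ k, p k * V' t k with hw'def
  set C : ℝ := ∑ k, p k * c k with hCdef
  have hC0 : 0 ≤ C := Finset.sum_nonneg fun k _ => mul_nonneg (hppos k).le (hc k)
  -- derivative of w
  have hw : ∀ t ≥ (0:ℝ), HasDerivWithinAt w (w' t) (Set.Ici (0:ℝ)) t := by
    intro t ht
    have hcomp : ∀ k, HasDerivWithinAt (fun s => V s k) (V' t k) (Set.Ici (0:ℝ)) t := by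
      intro k
      exact (ContinuousLinearMap.proj (R := ℝ) (φ := fun _ : Fin nbar => ℝ)
        k).hasFDerivAt.comp_hasDerivWithinAt t (hV t ht)
    exact HasDerivWithinAt.fun_sum fun k _ => (hcomp k).const_mul (p k)
  -- differential inequality for w
  have hb : ∀ t ≥ (0:ℝ), w' t ≤ -lam * w t + C := by
    intro t ht
    have h1 : w' t ≤ ∑ k, p k * (Γ.mulVec (V t) k + c k) :=
      Finset.sum_le_sum fun k _ => mul_le_mul_of_nonneg_left (hV' t ht k) (hppos k).le
    have h2 : ∑ k, p k * (Γ.mulVec (V t) k + c k)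
        = (∑ k, p k * Γ.mulVec (V t) k) + C := by
      rw [hCdef, ← Finset.sum_add_distrib]
      exact Finset.sum_congr rfl fun k _ => by ring
    have h3 : (∑ k, p k * Γ.mulVec (V t) k) = -∑ j, V t j := by
      have : (∑ k, p k * Γ.mulVec (V t) k) = ∑ j, (∑ k, Γ k j * p k) * V t j := by
        simp only [Matrix.mulVec, dotProduct, Finset.mul_sum, Finset.sum_mul]
        rw [Finset.sum_comm]
        exact Finset.sum_congr rfl fun j _ => Finset.sum_congr rfl fun k _ => by ring
      rw [this, ← Finset.sum_neg_distrib]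
      exact Finset.sum_congr rfl fun j _ => by rw [hpeq j]; ring
    have h4 : lam * w t ≤ ∑ j, V t j := by
      rw [hwdef]
      simp only
      rw [Finset.mul_sum]
      refine Finset.sum_le_sum fun j _ => ?_
      have hlp : lam * p j ≤ 1 := by
        have h5 : lam * p j ≤ lam * P := mul_le_mul_of_nonneg_left (hpleP j) hlam0.le
        rw [hlamdef, inv_mul_cancel₀ hP0.ne'] at h5
        rw [hlamdef]
        exact h5
      nlinarith [hlp, hV0 t ht j, hlam0, hppos j]
    calc w' t ≤ (∑ k, p k * Γ.mulVec (V t) k) + C := h1.trans (le_of_eq h2)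
      _ = -∑ j, V t j + C := by rw [h3]
      _ ≤ -lam * w t + C := by linarith [h4]
  have hgron := gronwall_scalar hlam0 hC0 hw hb
  -- bounds on w 0 and C
  have hw0 : w 0 ≤ P / μm * αbar (eucNormFin (e 0)) := by
    have h1 : w 0 ≤ ∑ k, P / μm * (μ k * V 0 k) := by
      refine Finset.sum_le_sum fun k _ => ?_
      have hk : p k ≤ P / μm * μ k := by
        rw [div_mul_eq_mul_div, le_div_iff₀ hμm_pos]
        nlinarith [hpleP k, hμm_le k, hP0, hppos k, hμm_pos, hμpos k]
      calc p k * V 0 k ≤ (P / μm * μ k) * V 0 k :=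
            mul_le_mul_of_nonneg_right hk (hV0 0 le_rfl k)
        _ = P / μm * (μ k * V 0 k) := by ring
    have h2 : ∑ k, P / μm * (μ k * V 0 k) = P / μm * ∑ k, μ k * V 0 k := by
      rw [Finset.mul_sum]
    have h3 : P / μm * ∑ k, μ k * V 0 k ≤ P / μm * αbar (eucNormFin (e 0)) :=
      mul_le_mul_of_nonneg_left (hsand 0 le_rfl).2 (div_nonneg hP0.le hμm_pos.le)
    linarith
  have hCb : C ≤ nbar * P * eucNormFin c := by
    have h1 : C ≤ ∑ _k : Fin nbar, P * eucNormFin c :=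
      Finset.sum_le_sum fun k _ =>
        mul_le_mul (hpleP k) (henc k) (hc k) hP0.le
    have h2 : ∑ _k : Fin nbar, P * eucNormFin c = nbar * (P * eucNormFin c) := by
      rw [Finset.sum_const, Finset.card_univ, Fintype.card_fin, nsmul_eq_mul]
    calc C ≤ ∑ _k : Fin nbar, P * eucNormFin c := h1
      _ = nbar * (P * eucNormFin c) := h2
      _ = nbar * P * eucNormFin c := by ring
  -- main estimates at time t
  intro t ht
  set E : ℝ := Real.exp (-lam * t) with hEdef
  have hE0 : 0 < E := Real.exp_pos _
  have hE1 : E ≤ 1 := by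
    rw [hEdef, ← Real.exp_zero]
    exact Real.exp_le_exp.mpr (by nlinarith [hlam0, ht])
  have hab0 : 0 ≤ αbar (eucNormFin (e 0)) := hαbar.nonneg _ (enorm_nonneg' _)
  -- first conclusion
  have hwt0 : 0 ≤ w t := Finset.sum_nonneg fun k _ => mul_nonneg (hppos k).le (hV0 t ht k)
  have hmain : α (eucNormFin (e t)) ≤
      eucNormFin μ * M * E * αbar (eucNormFin (e 0)) / μm + eucNormFin μ * (M / lam) * eucNormFin c := by
    have S1 : α (eucNormFin (e t)) ≤ ∑ k, μ k * V t k := (hsand t ht).1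
    have S2 : ∑ k, μ k * V t k ≤ eucNormFin μ / pm * w t := by
      have h1 : ∑ k, μ k * V t k ≤ ∑ k, eucNormFin μ / pm * (p k * V t k) := by
        refine Finset.sum_le_sum fun k _ => ?_
        have hk : μ k ≤ eucNormFin μ / pm * p k := by
          rw [div_mul_eq_mul_div, le_div_iff₀ hpm_pos]
          nlinarith [henμ k, hpm_le k, hμpos k, hpm_pos, henμ0]
        calc μ k * V t k ≤ (eucNormFin μ / pm * p k) * V t k :=
              mul_le_mul_of_nonneg_right hk (hV0 t ht k)
          _ = eucNormFin μ / pm * (p k * V t k) := by ring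
      rw [← Finset.mul_sum] at h1
      exact h1
    have S3 : w t ≤ w 0 * E + C / lam := hgron t ht
    have S4 : eucNormFin μ / pm * w t ≤ eucNormFin μ / pm * (w 0 * E + C / lam) :=
      mul_le_mul_of_nonneg_left S3 (div_nonneg henμ0 hpm_pos.le)
    -- split and bound
    have hTa : eucNormFin μ / pm * (w 0 * E) ≤ eucNormFin μ * M * E * αbar (eucNormFin (e 0)) / μm := by
      have h1 : w 0 * E ≤ P / μm * αbar (eucNormFin (e 0)) * E :=
        mul_le_mul_of_nonneg_right hw0 hE0.le
      have h2 : eucNormFin μ / pm * (w 0 * E) ≤ eucNormFin μ / pm * (P / μm * αbar (eucNormFin (e 0)) * E) :=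
        mul_le_mul_of_nonneg_left h1 (div_nonneg henμ0 hpm_pos.le)
      have h3 : eucNormFin μ / pm * (P / μm * αbar (eucNormFin (e 0)) * E)
          = (P / pm) * (eucNormFin μ * E * αbar (eucNormFin (e 0)) / μm) := by
        ring
      have h4 : (P / pm) * (eucNormFin μ * E * αbar (eucNormFin (e 0)) / μm)
          ≤ M * (eucNormFin μ * E * αbar (eucNormFin (e 0)) / μm) := by
        refine mul_le_mul_of_nonneg_right hMP ?_
        positivity
      have h5 : M * (eucNormFin μ * E * αbar (eucNormFin (e 0)) / μm)
          = eucNormFin μ * M * E * αbar (eucNormFin (e 0)) / μm := by ring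
      linarith
    have hTb : eucNormFin μ / pm * (C / lam) ≤ eucNormFin μ * (M / lam) * eucNormFin c := by
      have h1 : C / lam ≤ nbar * P * eucNormFin c / lam := by
        gcongr
      have h2 : eucNormFin μ / pm * (C / lam) ≤ eucNormFin μ / pm * (nbar * P * eucNormFin c / lam) :=
        mul_le_mul_of_nonneg_left h1 (div_nonneg henμ0 hpm_pos.le)
      have h3 : eucNormFin μ / pm * (nbar * P * eucNormFin c / lam)
          = (nbar * P / pm) * (eucNormFin μ * eucNormFin c / lam) := by
        ring
      have h4 : (nbar * P / pm) * (eucNormFin μ * eucNormFin c / lam)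
          ≤ M * (eucNormFin μ * eucNormFin c / lam) := by
        refine mul_le_mul_of_nonneg_right hMnP ?_
        positivity
      have h5 : M * (eucNormFin μ * eucNormFin c / lam) = eucNormFin μ * (M / lam) * eucNormFin c := by ring
      linarith
    calc α (eucNormFin (e t)) ≤ ∑ k, μ k * V t k := S1
      _ ≤ eucNormFin μ / pm * w t := S2
      _ ≤ eucNormFin μ / pm * (w 0 * E + C / lam) := S4
      _ = eucNormFin μ / pm * (w 0 * E) + eucNormFin μ / pm * (C / lam) := by ring
      _ ≤ eucNormFin μ * M * E * αbar (eucNormFin (e 0)) / μm + eucNormFin μ * (M / lam) * eucNormFin c := by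
          linarith
  refine ⟨hmain, ?_⟩
  -- second conclusion
  set A : ℝ := eucNormFin μ * M * αbar (eucNormFin (e 0)) / μm with hAdef
  set Bc : ℝ := eucNormFin μ * (M / lam) * eucNormFin c with hBcdef
  have hA0 : 0 ≤ A := by
    rw [hAdef]
    have hM0 : (0:ℝ) ≤ M := le_trans zero_le_one hM1
    positivity
  have hB0 : 0 ≤ Bc := by
    rw [hBcdef]
    have hM0 : (0:ℝ) ≤ M := le_trans zero_le_one hM1
    positivity
  have hT1A : eucNormFin μ * M * E * αbar (eucNormFin (e 0)) / μm ≤ A := by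
    rw [hAdef]
    have h1 : eucNormFin μ * M * E * αbar (eucNormFin (e 0)) / μm
        = (eucNormFin μ * M * αbar (eucNormFin (e 0)) / μm) * E := by ring
    have hM0 : (0:ℝ) ≤ M := le_trans zero_le_one hM1
    have h2 : (eucNormFin μ * M * αbar (eucNormFin (e 0)) / μm) * E
        ≤ (eucNormFin μ * M * αbar (eucNormFin (e 0)) / μm) * 1 := by
      refine mul_le_mul_of_nonneg_left hE1 ?_
      positivity
    rw [h1]
    linarith
  have hαAB : α (eucNormFin (e t)) ≤ A + Bc := by
    linarith [hT1A, hmain]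
  have hen_t : (0:ℝ) ≤ eucNormFin (e t) := enorm_nonneg' _
  -- case on which of A, Bc is larger
  have hkey : eucNormFin (e t) ≤ αinv (2 * A) + αinv (2 * Bc) := by
    rcases le_total A Bc with hab | hab
    · -- A ≤ Bc : α(e t) ≤ 2 Bc
      have h2B : α (eucNormFin (e t)) ≤ 2 * Bc := by linarith
      obtain ⟨hinv0, hinveq⟩ := hαinv.2 (2 * Bc) (by linarith)
      have hle : eucNormFin (e t) ≤ αinv (2 * Bc) := by
        by_contra hcon
        push_neg at hcon
        have := hα.mono (Set.mem_Ici.mpr hinv0) (Set.mem_Ici.mpr hen_t) hcon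
        rw [hinveq] at this
        linarith
      have hinv0' : 0 ≤ αinv (2 * A) := (hαinv.2 (2 * A) (by linarith)).1
      linarith
    · -- Bc ≤ A : α(e t) ≤ 2 A
      have h2A : α (eucNormFin (e t)) ≤ 2 * A := by linarith
      obtain ⟨hinv0, hinveq⟩ := hαinv.2 (2 * A) (by linarith)
      have hle : eucNormFin (e t) ≤ αinv (2 * A) := by
        by_contra hcon
        push_neg at hcon
        have := hα.mono (Set.mem_Ici.mpr hinv0) (Set.mem_Ici.mpr hen_t) hcon
        rw [hinveq] at this
        linarith
      have hinv0' : 0 ≤ αinv (2 * Bc) := (hαinv.2 (2 * Bc) (by linarith)).1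
      linarith
  rw [hAdef, hBcdef] at hkey
  exact hkey
end

section
/- (Step 3 composite inequality.) Let H ∈ ℝᴺˣᴺ be symmetric positive semidefinite, and let K₃ ∈ ℝᴺˣᴺ be diagonal with positive diagonal entries such that H K₃ is symmetric. Let κ₂, ε₂ > 0 satisfy λ_min(HK₃) ≤ ε₂κ₂ − 1. Let w ∈ ℝᴺ with w ≠ 0, and let d, d̂, u ∈ ℝᴺ satisfy |d| ≤ Δ_a and |u| ≤ Δ̄_a for constants Δ_a, Δ̄_a ≥ 0; write d̃ := d − d̂. Then −(w/|w|)ᵀ H K₃ w + κ₂ d̂ᵀ H d̃ + (1/ε₂) uᵀ H d̃ ≤ −min{λ_min(HK₃), ε₂κ₂ − 1} · ( |w| + (1/(2ε₂)) d̃ᵀ H d̃ ) + (κ₂/2) λ_max(H) Δ_a² + (1/(2ε₂)) λ_max(H) Δ̄_a². -/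
/-- The Euclidean norm on `ℝⁿ`. -/
noncomputable def euclNorm {n : ℕ} (x : Fin n → ℝ) : ℝ := Real.sqrt (∑ i, x i ^ 2)

open Matrix

lemma dot_mulVec_spectral {N : ℕ} {A : Matrix (Fin N) (Fin N) ℝ} (hA : A.IsHermitian)
    (x : Fin N → ℝ) :
    ∃ y : Fin N → ℝ, (∑ i, y i ^ 2) = (∑ i, x i ^ 2) ∧
      x ⬝ᵥ A.mulVec x = ∑ i, hA.eigenvalues i * y i ^ 2 := by
  set U : Matrix (Fin N) (Fin N) ℝ := (hA.eigenvectorUnitary : Matrix (Fin N) (Fin N) ℝ) with hU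
  have hstarU : star U = Uᵀ := by
    rw [star_eq_conjTranspose, conjTranspose_eq_transpose_of_trivial]
  have hUstar : (U * star U) = 1 := Unitary.coe_mul_star_self hA.eigenvectorUnitary
  set y : Fin N → ℝ := (star U).mulVec x with hy
  have hxy : U.mulVec y = x := by
    rw [hy, mulVec_mulVec, hUstar, one_mulVec]
  have hnorm : (∑ i, y i ^ 2) = ∑ i, x i ^ 2 := by
    have h1 : (∑ i, y i ^ 2) = y ⬝ᵥ y := by simp [dotProduct, sq]
    have h2 : (∑ i, x i ^ 2) = x ⬝ᵥ x := by simp [dotProduct, sq]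
    rw [h1, h2]
    calc y ⬝ᵥ y = y ⬝ᵥ (star U).mulVec x := by rw [hy]
      _ = (y ᵥ* star U) ⬝ᵥ x := by rw [dotProduct_mulVec]
      _ = ((star U)ᵀ.mulVec y) ⬝ᵥ x := by rw [mulVec_transpose]
      _ = (U.mulVec y) ⬝ᵥ x := by rw [hstarU, transpose_transpose]
      _ = x ⬝ᵥ x := by rw [hxy]
  refine ⟨y, hnorm, ?_⟩
  have hspec := hA.spectral_theorem
  calc x ⬝ᵥ A.mulVec x
      = x ⬝ᵥ (U * (diagonal (RCLike.ofReal ∘ hA.eigenvalues)) * star U).mulVec x := by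
        exact congrArg (fun M => x ⬝ᵥ M *ᵥ x) hspec
    _ = x ⬝ᵥ U.mulVec ((diagonal (RCLike.ofReal ∘ hA.eigenvalues)).mulVec y) := by
        rw [← mulVec_mulVec, ← mulVec_mulVec, hy]
    _ = (x ᵥ* U) ⬝ᵥ ((diagonal (RCLike.ofReal ∘ hA.eigenvalues)).mulVec y) := by
        rw [dotProduct_mulVec]
    _ = y ⬝ᵥ ((diagonal (RCLike.ofReal ∘ hA.eigenvalues)).mulVec y) := by
        congr 1
        rw [hy, hstarU, mulVec_transpose]
    _ = ∑ i, hA.eigenvalues i * y i ^ 2 := by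
        simp [dotProduct, mulVec_diagonal]
        exact Finset.sum_congr rfl fun i _ => by ring

lemma rayleigh_inf_le {N : ℕ} [Nonempty (Fin N)] {A : Matrix (Fin N) (Fin N) ℝ}
    (hA : A.IsHermitian) (x : Fin N → ℝ) :
    (⨅ i, hA.eigenvalues i) * (∑ i, x i ^ 2) ≤ x ⬝ᵥ A.mulVec x := by
  obtain ⟨y, hnorm, heq⟩ := dot_mulVec_spectral hA x
  rw [heq, ← hnorm, Finset.mul_sum]
  exact Finset.sum_le_sum fun i _ => mul_le_mul_of_nonneg_right
    (ciInf_le (Set.Finite.bddBelow (Set.finite_range _)) i) (sq_nonneg _)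

lemma rayleigh_le_sup {N : ℕ} [Nonempty (Fin N)] {A : Matrix (Fin N) (Fin N) ℝ}
    (hA : A.IsHermitian) (x : Fin N → ℝ) :
    x ⬝ᵥ A.mulVec x ≤ (⨆ i, hA.eigenvalues i) * (∑ i, x i ^ 2) := by
  obtain ⟨y, hnorm, heq⟩ := dot_mulVec_spectral hA x
  rw [heq, ← hnorm, Finset.mul_sum]
  exact Finset.sum_le_sum fun i _ => mul_le_mul_of_nonneg_right
    (le_ciSup (Set.Finite.bddAbove (Set.finite_range _)) i) (sq_nonneg _)

/-- Step 3 composite inequality of the backstepping design: with `H` symmetric positive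
semidefinite, `K₃ = diag k₃` with positive entries, `H K₃` symmetric with
`λ_min(H K₃) ≤ ε₂ κ₂ - 1`, `w ≠ 0`, `|d| ≤ Δ_a`, `|u| ≤ Δ̄_a`, and `d̃ = d - d̂`:
`-sgn(w)ᵀ H K₃ w + κ₂ d̂ᵀ H d̃ + (1/ε₂) uᵀ H d̃
  ≤ -min(λ_min(HK₃), ε₂κ₂ - 1)(|w| + d̃ᵀ H d̃/(2ε₂))
    + (κ₂/2) λ_max(H) Δ_a² + λ_max(H) Δ̄_a²/(2ε₂)`. -/
theorem backstepping_step3_composite {N : ℕ}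
    (H : Matrix (Fin N) (Fin N) ℝ) (hH : H.PosSemidef)
    (k₃ : Fin N → ℝ) (hk₃ : ∀ i, 0 < k₃ i)
    (hHK : (H * Matrix.diagonal k₃).IsHermitian)
    (κ₂ ε₂ : ℝ) (hκ₂ : 0 < κ₂) (hε₂ : 0 < ε₂)
    (hgap : (⨅ i, hHK.eigenvalues i) ≤ ε₂ * κ₂ - 1)
    (w : Fin N → ℝ) (hw : w ≠ 0)
    (d dhat u : Fin N → ℝ) (Δa Δabar : ℝ) (hΔa : 0 ≤ Δa) (hΔabar : 0 ≤ Δabar)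
    (hd : euclNorm d ≤ Δa) (hu : euclNorm u ≤ Δabar) :
    -((1 / euclNorm w) * (w ⬝ᵥ (H * Matrix.diagonal k₃).mulVec w)) +
      κ₂ * (dhat ⬝ᵥ H.mulVec (d - dhat)) + (1 / ε₂) * (u ⬝ᵥ H.mulVec (d - dhat)) ≤
    -(min (⨅ i, hHK.eigenvalues i) (ε₂ * κ₂ - 1)) *
        (euclNorm w + (1 / (2 * ε₂)) * ((d - dhat) ⬝ᵥ H.mulVec (d - dhat))) +
      (κ₂ / 2) * (⨆ i, hH.isHermitian.eigenvalues i) * Δa ^ 2 +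
      (1 / (2 * ε₂)) * (⨆ i, hH.isHermitian.eigenvalues i) * Δabar ^ 2 := by
  haveI hNE : Nonempty (Fin N) := by
    by_contra h
    exact hw (funext fun i => absurd ⟨i⟩ h)
  set e : Fin N → ℝ := d - dhat with he
  set lm := (⨅ i, hHK.eigenvalues i) with hlm
  set Λ := (⨆ i, hH.isHermitian.eigenvalues i) with hΛdef
  have hmin : min lm (ε₂ * κ₂ - 1) = lm := min_eq_left hgap
  have hsum_nonneg : ∀ x : Fin N → ℝ, (0:ℝ) ≤ ∑ i, x i ^ 2 :=
    fun x => Finset.sum_nonneg fun i _ => sq_nonneg _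
  have hsq : ∀ x : Fin N → ℝ, (euclNorm x) ^ 2 = ∑ i, x i ^ 2 :=
    fun x => Real.sq_sqrt (hsum_nonneg x)
  have hnw_pos : 0 < euclNorm w := by
    apply Real.sqrt_pos.mpr
    obtain ⟨i, hi⟩ := Function.ne_iff.mp hw
    exact Finset.sum_pos' (fun j _ => sq_nonneg _) ⟨i, Finset.mem_univ i, by rw [← sq_abs]; exact pow_pos (abs_pos.mpr hi) 2⟩
  -- symmetry and positivity of the H-form
  have hHsymm : ∀ a b : Fin N → ℝ, a ⬝ᵥ H.mulVec b = b ⬝ᵥ H.mulVec a := by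
    intro a b
    rw [dotProduct_mulVec, ← mulVec_transpose, ← conjTranspose_eq_transpose_of_trivial,
      hH.isHermitian.eq, dotProduct_comm]
  have hpsd : ∀ x : Fin N → ℝ, 0 ≤ x ⬝ᵥ H.mulVec x := fun x => by simpa using hH.dotProduct_mulVec_nonneg x
  have hcross : ∀ a b : Fin N → ℝ,
      a ⬝ᵥ H.mulVec b ≤ (a ⬝ᵥ H.mulVec a) / 2 + (b ⬝ᵥ H.mulVec b) / 2 := by
    intro a b
    have h0 := hpsd (a - b)
    have hexp : (a - b) ⬝ᵥ H.mulVec (a - b) =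
        a ⬝ᵥ H.mulVec a - 2 * (a ⬝ᵥ H.mulVec b) + b ⬝ᵥ H.mulVec b := by
      rw [mulVec_sub, dotProduct_sub, sub_dotProduct, sub_dotProduct, hHsymm b a]; ring
    linarith
  -- Rayleigh bounds
  have hΛ0 : 0 ≤ Λ :=
    le_trans (hH.eigenvalues_nonneg (Classical.arbitrary _))
      (le_ciSup (Set.Finite.bddAbove (Set.finite_range _)) _)
  have hdH : d ⬝ᵥ H.mulVec d ≤ Λ * Δa ^ 2 := by
    have h1 := rayleigh_le_sup hH.isHermitian d
    have h2 : (∑ i, d i ^ 2) ≤ Δa ^ 2 := by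
      rw [← hsq d]; exact pow_le_pow_left₀ (Real.sqrt_nonneg _) hd 2
    calc d ⬝ᵥ H.mulVec d ≤ Λ * ∑ i, d i ^ 2 := h1
      _ ≤ Λ * Δa ^ 2 := mul_le_mul_of_nonneg_left h2 hΛ0
  have huH : u ⬝ᵥ H.mulVec u ≤ Λ * Δabar ^ 2 := by
    have h1 := rayleigh_le_sup hH.isHermitian u
    have h2 : (∑ i, u i ^ 2) ≤ Δabar ^ 2 := by
      rw [← hsq u]; exact pow_le_pow_left₀ (Real.sqrt_nonneg _) hu 2
    calc u ⬝ᵥ H.mulVec u ≤ Λ * ∑ i, u i ^ 2 := h1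
      _ ≤ Λ * Δabar ^ 2 := mul_le_mul_of_nonneg_left h2 hΛ0
  have heHe : 0 ≤ e ⬝ᵥ H.mulVec e := hpsd e
  -- Term 1
  have hA1 : -((1 / euclNorm w) * (w ⬝ᵥ (H * Matrix.diagonal k₃).mulVec w)) ≤ -(lm * euclNorm w) := by
    have hK := rayleigh_inf_le hHK w
    have h1 : (1 / euclNorm w) * (lm * ∑ i, w i ^ 2) ≤
        (1 / euclNorm w) * (w ⬝ᵥ (H * Matrix.diagonal k₃).mulVec w) :=
      mul_le_mul_of_nonneg_left hK (by positivity)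
    have h2 : (1 / euclNorm w) * (lm * ∑ i, w i ^ 2) = lm * euclNorm w := by
      rw [← hsq w]; field_simp
    linarith
  -- Term 2
  have hA2 : κ₂ * (dhat ⬝ᵥ H.mulVec e) ≤
      κ₂ / 2 * (d ⬝ᵥ H.mulVec d) - κ₂ / 2 * (e ⬝ᵥ H.mulVec e) := by
    have hde : dhat ⬝ᵥ H.mulVec e = d ⬝ᵥ H.mulVec e - e ⬝ᵥ H.mulVec e := by
      rw [show dhat = d - e from (sub_sub_cancel d dhat).symm, sub_dotProduct]
    have hc := hcross d e
    have : dhat ⬝ᵥ H.mulVec e ≤ (d ⬝ᵥ H.mulVec d) / 2 - (e ⬝ᵥ H.mulVec e) / 2 := by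
      rw [hde]; linarith
    nlinarith [mul_le_mul_of_nonneg_left this hκ₂.le]
  -- Term 3
  have hA3 : (1 / ε₂) * (u ⬝ᵥ H.mulVec e) ≤
      1 / (2 * ε₂) * (u ⬝ᵥ H.mulVec u) + 1 / (2 * ε₂) * (e ⬝ᵥ H.mulVec e) := by
    have hc := hcross u e
    have h1 : (1 / ε₂) * (u ⬝ᵥ H.mulVec e) ≤
        (1 / ε₂) * ((u ⬝ᵥ H.mulVec u) / 2 + (e ⬝ᵥ H.mulVec e) / 2) :=
      mul_le_mul_of_nonneg_left hc (by positivity)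
    have h2 : (1 / ε₂) * ((u ⬝ᵥ H.mulVec u) / 2 + (e ⬝ᵥ H.mulVec e) / 2) =
        1 / (2 * ε₂) * (u ⬝ᵥ H.mulVec u) + 1 / (2 * ε₂) * (e ⬝ᵥ H.mulVec e) := by
      ring
    linarith
  -- gap term
  have hA6 : 1 / (2 * ε₂) * (e ⬝ᵥ H.mulVec e) - κ₂ / 2 * (e ⬝ᵥ H.mulVec e) ≤
      -(lm * (1 / (2 * ε₂) * (e ⬝ᵥ H.mulVec e))) := by
    have h := mul_le_mul_of_nonneg_right hgap heHe
    have h2 : (1 / (2 * ε₂)) * (lm * (e ⬝ᵥ H.mulVec e)) ≤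
        (1 / (2 * ε₂)) * ((ε₂ * κ₂ - 1) * (e ⬝ᵥ H.mulVec e)) :=
      mul_le_mul_of_nonneg_left h (by positivity)
    have h3 : (1 / (2 * ε₂)) * ((ε₂ * κ₂ - 1) * (e ⬝ᵥ H.mulVec e)) =
        κ₂ / 2 * (e ⬝ᵥ H.mulVec e) - 1 / (2 * ε₂) * (e ⬝ᵥ H.mulVec e) := by
      field_simp
    nlinarith
  rw [hmin]
  have hmul1 : κ₂ / 2 * (d ⬝ᵥ H.mulVec d) ≤ κ₂ / 2 * (Λ * Δa ^ 2) :=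
    mul_le_mul_of_nonneg_left hdH (by positivity)
  have hmul2 : 1 / (2 * ε₂) * (u ⬝ᵥ H.mulVec u) ≤ 1 / (2 * ε₂) * (Λ * Δabar ^ 2) :=
    mul_le_mul_of_nonneg_left huH (by positivity)
  nlinarith [hA1, hA2, hA3, hA6, hmul1, hmul2]
end
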